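/- Let d ≥ 2 and m > 0. Define ω : ℝ^{d−1} → ℝ, ω(k⃗) = √(‖k⃗‖² + m²), the Minkowski quadratic form q(k) = k_0² − Σ_{i=1}^{d−1} k_i² on ℝ^d, and let μ_m be the measure on ℝ^d obtained as the pushforward, under the map k⃗ ↦ (ω(k⃗), k⃗), of the measure on ℝ^{d−1} with density (2ω(k⃗))⁻¹ with respect to Lebesgue measure. Then for every linear automorphism Λ of ℝ^d satisfying q(Λ k) = q(k) for all k ∈ ℝ^d and mapping the set {k ∈ ℝ^d : q(k) = m², k_0 > 0} into itself, the pushforward of μ_m under Λ equals μ_m. -/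

import Mathlib

/-!
Let `φ k⃗ = (ω k⃗, k⃗)` (`massShellLift`) parametrize the forward shell, so that `δ⁺` is the
pushforward of `(2ω)⁻¹ dk⃗` under `φ`. Since `Λ` preserves the forward shell, `Λ ∘ φ = φ ∘ ψ`
for the induced map `ψ = (Λ ∘ φ)⃗` (`shellAction`) on spatial momenta; `ψ` is a bijection because
`Λ⁻¹` cannot send the forward sheet of `q = mass²` to the backward one. The claim thus reduces
to `|det Dψ(p)| = ω(ψ p) / ω(p)`. Completing `Dφ(p)` by the direction `φ p` to the linear map
`F_p (t, v) = t φ(p) + Dφ(p) v` (`massShellFrame`) and differentiating `Λ ∘ φ = φ ∘ ψ` gives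
`Λ ∘ F_p = F_{ψ p} ∘ (id × Dψ(p))`; moreover `det F_p = mass² / ω(p)`, and `|det Λ| = 1`
because `Λ` preserves the nondegenerate Minkowski form.
-/

open scoped BigOperators
open MeasureTheory

/-- The Minkowski quadratic form `q(k) = k₀² − ∑ᵢ kᵢ²` on `ℝ × ℝ^{d−1}`. -/
def minkowskiQ {m : ℕ} (k : ℝ × (Fin m → ℝ)) : ℝ :=
  k.1 ^ 2 - ∑ i, k.2 i ^ 2

/-- The relativistic energy `ω(k⃗) = √(‖k⃗‖² + mass²)`. -/
noncomputable def relEnergy {m : ℕ} (mass : ℝ) (k : Fin m → ℝ) : ℝ :=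
  Real.sqrt (∑ i, k i ^ 2 + mass ^ 2)

/-- The invariant measure `δ⁺_mass(k) = θ(k⁰) δ(k² − mass²)` on the positive mass shell:
the pushforward under `k⃗ ↦ (ω(k⃗), k⃗)` of the measure with density `(2ω(k⃗))⁻¹` with respect
to Lebesgue measure on `ℝ^{d−1}`. -/
noncomputable def massShellMeasure {m : ℕ} (mass : ℝ) : Measure (ℝ × (Fin m → ℝ)) :=
  Measure.map (fun k : Fin m → ℝ => ((relEnergy mass k, k) : ℝ × (Fin m → ℝ)))
    (volume.withDensity fun k : Fin m → ℝ => ENNReal.ofReal (1 / (2 * relEnergy mass k)))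

theorem LinearMap.BilinForm.det_mul_self_eq_one_of_isometry {R M : Type*} [CommRing R]
    [IsDomain R] [AddCommGroup M] [Module R M] [Module.Free R M] [Module.Finite R M]
    {B : LinearMap.BilinForm R M} (hB : B.Nondegenerate) {f : M →ₗ[R] M}
    (hf : ∀ x y, B (f x) (f y) = B x y) :
    LinearMap.det f * LinearMap.det f = 1 := by
  let b := Module.Free.chooseBasis R M
  have hG : (LinearMap.BilinForm.toMatrix b B).det ≠ 0 :=
    (LinearMap.BilinForm.nondegenerate_iff_det_ne_zero b).mp hB
  have h : (LinearMap.BilinForm.toMatrix b (B.comp f f)).det =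
      (LinearMap.BilinForm.toMatrix b B).det := by
    rw [show B.comp f f = B from LinearMap.ext₂ hf]
  rw [LinearMap.BilinForm.toMatrix_comp b b, Matrix.det_mul, Matrix.det_mul, Matrix.det_transpose,
    LinearMap.det_toMatrix] at h
  exact mul_right_cancel₀ hG (by linear_combination h)

theorem LinearMap.toMatrix_basis_prod_eq_fromBlocks {R ι₁ ι₂ M₁ M₂ : Type*} [CommSemiring R]
    [Fintype ι₁] [Fintype ι₂] [DecidableEq ι₁] [DecidableEq ι₂] [AddCommMonoid M₁] [Module R M₁]
    [AddCommMonoid M₂] [Module R M₂] (b₁ : Module.Basis ι₁ R M₁) (b₂ : Module.Basis ι₂ R M₂)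
    (f : (M₁ × M₂) →ₗ[R] M₁ × M₂) :
    toMatrix (b₁.prod b₂) (b₁.prod b₂) f =
      Matrix.fromBlocks (toMatrix b₁ b₁ (fst R M₁ M₂ ∘ₗ f ∘ₗ inl R M₁ M₂))
        (toMatrix b₂ b₁ (fst R M₁ M₂ ∘ₗ f ∘ₗ inr R M₁ M₂))
        (toMatrix b₁ b₂ (snd R M₁ M₂ ∘ₗ f ∘ₗ inl R M₁ M₂))
        (toMatrix b₂ b₂ (snd R M₁ M₂ ∘ₗ f ∘ₗ inr R M₁ M₂)) := by
  ext (i | i) (j | j) <;> simp [toMatrix_apply]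

theorem MeasureTheory.map_withDensity_eq_self_of_abs_det_fderiv {E : Type*}
    [NormedAddCommGroup E] [NormedSpace ℝ E] [FiniteDimensional ℝ E] [MeasurableSpace E]
    [BorelSpace E] (μ : Measure E) [μ.IsAddHaarMeasure] {f : E → E} {f' : E → E →L[ℝ] E}
    (hf' : ∀ x, HasFDerivAt f (f' x) x) (hf : f.Bijective) {ρ : E → ENNReal}
    (hρ : ∀ x, ENNReal.ofReal |(f' x).det| * ρ (f x) = ρ x) :
    (μ.withDensity ρ).map f = μ.withDensity ρ := by
  have hmeas : Measurable f :=
    (continuous_iff_continuousAt.2 fun x => (hf' x).continuousAt).measurable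
  ext s hs
  rw [Measure.map_apply hmeas hs, withDensity_apply _ hs, withDensity_apply _ (hmeas hs)]
  conv_rhs => rw [← Set.image_preimage_eq s hf.surjective]
  rw [lintegral_image_eq_lintegral_abs_det_fderiv_mul μ (hmeas hs)
    (fun x _ => (hf' x).hasFDerivWithinAt) hf.injective.injOn]
  simp only [hρ]

def minkowskiBilin (m : ℕ) : LinearMap.BilinForm ℝ (ℝ × (Fin m → ℝ)) :=
  (LinearMap.mul ℝ ℝ).compl₁₂ (LinearMap.fst ℝ ℝ _) (LinearMap.fst ℝ ℝ _) -
    (dotProductBilin ℝ ℝ).compl₁₂ (LinearMap.snd ℝ ℝ _) (LinearMap.snd ℝ ℝ _)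

def forwardMassShell (m : ℕ) (mass : ℝ) : Set (ℝ × (Fin m → ℝ)) :=
  {k | minkowskiQ k = mass ^ 2 ∧ 0 < k.1}

noncomputable def massShellLift {m : ℕ} (mass : ℝ) (k : Fin m → ℝ) : ℝ × (Fin m → ℝ) :=
  (relEnergy mass k, k)

noncomputable def shellAction {m : ℕ} (mass : ℝ) (Λ : ℝ × (Fin m → ℝ) → ℝ × (Fin m → ℝ))
    (p : Fin m → ℝ) : Fin m → ℝ :=
  (Λ (massShellLift mass p)).2

noncomputable def massShellFrame {m : ℕ} (mass : ℝ) (p : Fin m → ℝ) :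
    (ℝ × (Fin m → ℝ)) →ₗ[ℝ] ℝ × (Fin m → ℝ) :=
  (LinearMap.toSpanSingleton ℝ _ (massShellLift mass p)).coprod
    (fderiv ℝ (massShellLift mass) p : (Fin m → ℝ) →ₗ[ℝ] ℝ × (Fin m → ℝ))

section MassShell

variable {m : ℕ} {mass : ℝ}

theorem minkowskiBilin_apply (x y : ℝ × (Fin m → ℝ)) :
    minkowskiBilin m x y = x.1 * y.1 - ∑ i, x.2 i * y.2 i := by
  simp [minkowskiBilin, dotProduct]

theorem minkowskiBilin_self (k : ℝ × (Fin m → ℝ)) : minkowskiBilin m k k = minkowskiQ k := by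
  simp [minkowskiBilin_apply, minkowskiQ, sq]

theorem minkowskiBilin_comm (x y : ℝ × (Fin m → ℝ)) :
    minkowskiBilin m x y = minkowskiBilin m y x := by
  simp only [minkowskiBilin_apply, mul_comm]

theorem minkowskiBilin_nondegenerate : (minkowskiBilin m).Nondegenerate := by
  refine .ofSeparatingLeft fun x hx => ?_
  have h := hx (x.1, -x.2)
  simp only [minkowskiBilin_apply, Pi.neg_apply, mul_neg, Finset.sum_neg_distrib,
    sub_neg_eq_add] at h
  have hsq : ∀ i ∈ Finset.univ, 0 ≤ x.2 i * x.2 i := fun i _ => mul_self_nonneg _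
  have hsum := Finset.sum_nonneg hsq
  have h₁ : x.1 * x.1 = 0 := by linarith [mul_self_nonneg x.1]
  have h₂ := (Finset.sum_eq_zero_iff_of_nonneg hsq).mp (by linarith [mul_self_nonneg x.1])
  exact Prod.ext (mul_self_eq_zero.mp h₁)
    (funext fun i => mul_self_eq_zero.mp (h₂ i (Finset.mem_univ i)))

theorem minkowskiBilin_map_map {Λ : (ℝ × (Fin m → ℝ)) →ₗ[ℝ] ℝ × (Fin m → ℝ)}
    (hq : ∀ k, minkowskiQ (Λ k) = minkowskiQ k) (x y : ℝ × (Fin m → ℝ)) :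
    minkowskiBilin m (Λ x) (Λ y) = minkowskiBilin m x y := by
  have h := hq (x + y)
  simp only [← minkowskiBilin_self, map_add, LinearMap.add_apply] at h hq
  rw [hq, hq, minkowskiBilin_comm (Λ y), minkowskiBilin_comm y x] at h
  linarith

theorem abs_det_eq_one_of_minkowskiQ {Λ : (ℝ × (Fin m → ℝ)) →ₗ[ℝ] ℝ × (Fin m → ℝ)}
    (hq : ∀ k, minkowskiQ (Λ k) = minkowskiQ k) : |LinearMap.det Λ| = 1 := by
  have h := LinearMap.BilinForm.det_mul_self_eq_one_of_isometry minkowskiBilin_nondegenerate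
    (minkowskiBilin_map_map hq)
  rcases mul_self_eq_one_iff.mp h with h | h <;> simp [h]

theorem minkowskiQ_neg (k : ℝ × (Fin m → ℝ)) : minkowskiQ (-k) = minkowskiQ k := by
  simp [minkowskiQ]

theorem relEnergy_sq (mass : ℝ) (k : Fin m → ℝ) :
    relEnergy mass k ^ 2 = ∑ i, k i ^ 2 + mass ^ 2 :=
  Real.sq_sqrt (by positivity)

theorem relEnergy_pos (hmass : mass ≠ 0) (k : Fin m → ℝ) : 0 < relEnergy mass k :=
  Real.sqrt_pos.2 (by positivity)

theorem massShellLift_mem (hmass : mass ≠ 0) (k : Fin m → ℝ) :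
    massShellLift mass k ∈ forwardMassShell m mass := by
  refine ⟨?_, relEnergy_pos hmass k⟩
  simp only [minkowskiQ, massShellLift, relEnergy_sq]
  ring

theorem massShellLift_snd {k : ℝ × (Fin m → ℝ)} (hk : k ∈ forwardMassShell m mass) :
    massShellLift mass k.2 = k := by
  obtain ⟨hq, hpos⟩ := hk
  refine Prod.ext ?_ rfl
  rw [massShellLift, relEnergy, show ∑ i, k.2 i ^ 2 + mass ^ 2 = k.1 ^ 2 by
    unfold minkowskiQ at hq; linarith]
  exact Real.sqrt_sq hpos.le

theorem mapsTo_symm_forwardMassShell (hmass : mass ≠ 0)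
    {Λ : (ℝ × (Fin m → ℝ)) ≃ₗ[ℝ] ℝ × (Fin m → ℝ)} (hq : ∀ k, minkowskiQ (Λ k) = minkowskiQ k)
    (hshell : Set.MapsTo Λ (forwardMassShell m mass) (forwardMassShell m mass)) :
    Set.MapsTo Λ.symm (forwardMassShell m mass) (forwardMassShell m mass) := by
  intro y ⟨hy, hy₁⟩
  have hk : minkowskiQ (Λ.symm y) = mass ^ 2 := by rw [← hq, Λ.apply_symm_apply, hy]
  refine ⟨hk, lt_of_not_ge fun hk₁ => ?_⟩
  rcases hk₁.lt_or_eq with hneg | hzero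
  · have hmem : -Λ.symm y ∈ forwardMassShell m mass :=
      ⟨by rw [minkowskiQ_neg, hk], by simpa⟩
    have := (hshell hmem).2
    simp only [map_neg, Λ.apply_symm_apply, Prod.fst_neg] at this
    linarith
  · have : minkowskiQ (Λ.symm y) ≤ 0 := by
      simp only [minkowskiQ, hzero]
      nlinarith [Finset.sum_nonneg fun i (_ : i ∈ Finset.univ) => sq_nonneg ((Λ.symm y).2 i)]
    nlinarith [sq_pos_of_ne_zero hmass]

theorem massShellLift_shellAction (hmass : mass ≠ 0) {Λ : ℝ × (Fin m → ℝ) → ℝ × (Fin m → ℝ)}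
    (hshell : Set.MapsTo Λ (forwardMassShell m mass) (forwardMassShell m mass))
    (p : Fin m → ℝ) :
    massShellLift mass (shellAction mass Λ p) = Λ (massShellLift mass p) :=
  massShellLift_snd (hshell (massShellLift_mem hmass p))

theorem shellAction_comp (hmass : mass ≠ 0) {Λ : ℝ × (Fin m → ℝ) → ℝ × (Fin m → ℝ)}
    (hshell : Set.MapsTo Λ (forwardMassShell m mass) (forwardMassShell m mass))
    (Λ' : ℝ × (Fin m → ℝ) → ℝ × (Fin m → ℝ)) :
    shellAction mass Λ' ∘ shellAction mass Λ = shellAction mass (Λ' ∘ Λ) :=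
  funext fun p => by
    rw [Function.comp_apply, shellAction, massShellLift_shellAction hmass hshell]; rfl

theorem shellAction_bijective (hmass : mass ≠ 0)
    {Λ : (ℝ × (Fin m → ℝ)) ≃ₗ[ℝ] ℝ × (Fin m → ℝ)} (hq : ∀ k, minkowskiQ (Λ k) = minkowskiQ k)
    (hshell : Set.MapsTo Λ (forwardMassShell m mass) (forwardMassShell m mass)) :
    (shellAction mass Λ).Bijective := by
  have hshell' := mapsTo_symm_forwardMassShell hmass hq hshell
  refine Function.bijective_iff_has_inverse.mpr
    ⟨shellAction mass Λ.symm, fun p => ?_, fun p => ?_⟩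
  · rw [← Function.comp_apply (f := shellAction mass Λ.symm), shellAction_comp hmass hshell]
    simp [shellAction, massShellLift]
  · rw [← Function.comp_apply (f := shellAction mass Λ), shellAction_comp hmass hshell']
    simp [shellAction, massShellLift]

theorem hasFDerivAt_relEnergy (hmass : mass ≠ 0) (p : Fin m → ℝ) :
    HasFDerivAt (relEnergy mass)
      ((relEnergy mass p)⁻¹ •
        ∑ i, p i • ContinuousLinearMap.proj (R := ℝ) (φ := fun _ : Fin m => ℝ) i) p := by
  have hsum : HasFDerivAt (fun k : Fin m → ℝ => ∑ i, k i ^ 2 + mass ^ 2)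
      (∑ i, (2 • p i ^ 1) • ContinuousLinearMap.proj (R := ℝ) (φ := fun _ : Fin m => ℝ) i) p :=
    (HasFDerivAt.fun_sum fun i _ => (hasFDerivAt_apply (𝕜 := ℝ) i p).pow 2).add_const _
  refine (hsum.sqrt (by positivity)).congr_fderiv ?_
  ext v
  simp [relEnergy, mul_assoc, ← Finset.mul_sum]

theorem hasFDerivAt_massShellLift (hmass : mass ≠ 0) (p : Fin m → ℝ) :
    HasFDerivAt (massShellLift mass)
      (((relEnergy mass p)⁻¹ •
        ∑ i, p i • ContinuousLinearMap.proj (R := ℝ) (φ := fun _ : Fin m => ℝ) i).prod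
        (ContinuousLinearMap.id ℝ _)) p :=
  (hasFDerivAt_relEnergy hmass p).prodMk (hasFDerivAt_id p)

theorem differentiable_massShellLift (hmass : mass ≠ 0) :
    Differentiable ℝ (massShellLift (m := m) mass) :=
  fun p => (hasFDerivAt_massShellLift hmass p).differentiableAt

theorem fderiv_massShellLift_apply (hmass : mass ≠ 0) (p v : Fin m → ℝ) :
    fderiv ℝ (massShellLift mass) p v = ((∑ i, p i * v i) / relEnergy mass p, v) := by
  rw [(hasFDerivAt_massShellLift hmass p).fderiv]
  simp [div_eq_inv_mul]

theorem differentiable_shellAction (hmass : mass ≠ 0)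
    (Λ : (ℝ × (Fin m → ℝ)) →ₗ[ℝ] ℝ × (Fin m → ℝ)) :
    Differentiable ℝ (shellAction mass Λ) :=
  (ContinuousLinearMap.snd ℝ ℝ _ ∘L LinearMap.toContinuousLinearMap Λ).differentiable.comp
    (differentiable_massShellLift hmass)

theorem det_massShellFrame (hmass : mass ≠ 0) (p : Fin m → ℝ) :
    LinearMap.det (massShellFrame mass p) = mass ^ 2 / relEnergy mass p := by
  have hsnd : LinearMap.snd ℝ ℝ _ ∘ₗ massShellFrame mass p ∘ₗ LinearMap.inr ℝ ℝ _ =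
      LinearMap.id := by
    refine LinearMap.ext fun v => ?_
    simp [massShellFrame, fderiv_massShellLift_apply hmass]
  rw [← LinearMap.det_toMatrix ((Module.Basis.singleton Unit ℝ).prod (Pi.basisFun ℝ (Fin m))),
    LinearMap.toMatrix_basis_prod_eq_fromBlocks, hsnd, LinearMap.toMatrix_id,
    Matrix.det_fromBlocks_one₂₂, Matrix.det_unique]
  simp only [massShellFrame, massShellLift, LinearMap.coprod_inl, LinearMap.coprod_inr,
    PUnit.default_eq_unit, Matrix.sub_apply, LinearMap.toMatrix_apply,
    Module.Basis.singleton_apply, LinearMap.coe_comp, LinearMap.coe_fst, Function.comp_apply,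
    LinearMap.toSpanSingleton_apply, one_smul, Module.Basis.singleton_repr, Matrix.mul_apply,
    Pi.basisFun_apply, ContinuousLinearMap.coe_coe, fderiv_massShellLift_apply hmass,
    Pi.single_apply, mul_ite, mul_one, mul_zero, Finset.sum_ite_eq', Finset.mem_univ,
    ↓reduceIte, LinearMap.coe_snd, Pi.basisFun_repr]
  have hω := (relEnergy_pos hmass p).ne'
  field_simp
  rw [← Finset.sum_div, mul_sub, mul_div_cancel₀ _ hω, ← sq, relEnergy_sq]
  ring

theorem comp_massShellFrame (hmass : mass ≠ 0) {Λ : (ℝ × (Fin m → ℝ)) →ₗ[ℝ] ℝ × (Fin m → ℝ)}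
    (hshell : Set.MapsTo Λ (forwardMassShell m mass) (forwardMassShell m mass))
    (p : Fin m → ℝ) :
    Λ ∘ₗ massShellFrame mass p =
      massShellFrame mass (shellAction mass Λ p) ∘ₗ
        LinearMap.id.prodMap (fderiv ℝ (shellAction mass Λ) p : (Fin m → ℝ) →ₗ[ℝ] Fin m → ℝ) := by
  have hcomm : Λ ∘ massShellLift mass = massShellLift mass ∘ shellAction mass Λ :=
    funext fun p => (massShellLift_shellAction hmass hshell p).symm
  have hchain : ∀ v, Λ (fderiv ℝ (massShellLift mass) p v) =
      fderiv ℝ (massShellLift mass) (shellAction mass Λ p)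
        (fderiv ℝ (shellAction mass Λ) p v) := by
    have h₁ := (LinearMap.toContinuousLinearMap Λ).hasFDerivAt.comp p
      (differentiable_massShellLift hmass p).hasFDerivAt
    have h₂ := (differentiable_massShellLift hmass _).hasFDerivAt.comp p
      (differentiable_shellAction hmass Λ p).hasFDerivAt
    rw [LinearMap.coe_toContinuousLinearMap', hcomm] at h₁
    exact fun v => congrArg (· v) (h₁.unique h₂)
  refine LinearMap.ext fun ⟨t, v⟩ => ?_
  simp [massShellFrame, hchain, massShellLift_shellAction hmass hshell]

theorem abs_det_fderiv_shellAction (hmass : mass ≠ 0)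
    {Λ : (ℝ × (Fin m → ℝ)) →ₗ[ℝ] ℝ × (Fin m → ℝ)} (hq : ∀ k, minkowskiQ (Λ k) = minkowskiQ k)
    (hshell : Set.MapsTo Λ (forwardMassShell m mass) (forwardMassShell m mass))
    (p : Fin m → ℝ) :
    |(fderiv ℝ (shellAction mass Λ) p).det| =
      relEnergy mass (shellAction mass Λ p) / relEnergy mass p := by
  have h := congrArg (|LinearMap.det ·|) (comp_massShellFrame hmass hshell p)
  simp only [LinearMap.det_comp, LinearMap.det_prodMap, LinearMap.det_id, one_mul, abs_mul,
    abs_det_eq_one_of_minkowskiQ hq, det_massShellFrame hmass] at h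
  have hω := relEnergy_pos hmass p
  have hω' := relEnergy_pos hmass (shellAction mass Λ p)
  rw [abs_of_pos (by positivity), abs_of_pos (by positivity)] at h
  field_simp at h ⊢
  exact h.symm

theorem map_shellAction_withDensity (hmass : mass ≠ 0)
    {Λ : (ℝ × (Fin m → ℝ)) ≃ₗ[ℝ] ℝ × (Fin m → ℝ)} (hq : ∀ k, minkowskiQ (Λ k) = minkowskiQ k)
    (hshell : Set.MapsTo Λ (forwardMassShell m mass) (forwardMassShell m mass)) :
    (volume.withDensity fun k => ENNReal.ofReal (1 / (2 * relEnergy mass k))).map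
        (shellAction mass Λ) =
      volume.withDensity fun k => ENNReal.ofReal (1 / (2 * relEnergy mass k)) := by
  have hψ := differentiable_shellAction hmass (Λ : (ℝ × (Fin m → ℝ)) →ₗ[ℝ] ℝ × (Fin m → ℝ))
  have hjac := abs_det_fderiv_shellAction hmass
    (Λ := (Λ : (ℝ × (Fin m → ℝ)) →ₗ[ℝ] ℝ × (Fin m → ℝ))) hq hshell
  simp only [LinearEquiv.coe_coe] at hψ hjac
  refine map_withDensity_eq_self_of_abs_det_fderiv volume (fun p => (hψ p).hasFDerivAt)
    (shellAction_bijective hmass hq hshell) fun p => ?_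
  have hω := relEnergy_pos hmass p
  have hω' := relEnergy_pos hmass (shellAction mass Λ p)
  rw [hjac, ← ENNReal.ofReal_mul (by positivity)]
  congr 1
  field_simp

end MassShell

theorem massShellMeasure_lorentz_invariant_general
    (m : ℕ) (mass : ℝ) (hmass : 0 < mass)
    (Λ : (ℝ × (Fin m → ℝ)) ≃ₗ[ℝ] (ℝ × (Fin m → ℝ)))
    (hq : ∀ k, minkowskiQ (Λ k) = minkowskiQ k)
    (hshell : Set.MapsTo (⇑Λ)
      {k : ℝ × (Fin m → ℝ) | minkowskiQ k = mass ^ 2 ∧ 0 < k.1}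
      {k : ℝ × (Fin m → ℝ) | minkowskiQ k = mass ^ 2 ∧ 0 < k.1}) :
    Measure.map (⇑Λ) (massShellMeasure mass) = massShellMeasure mass := by
  have hΛ : Measurable Λ := Λ.toContinuousLinearEquiv.continuous.measurable
  have hlift : Measurable (massShellLift (m := m) mass) :=
    (differentiable_massShellLift hmass.ne').continuous.measurable
  have hψ : Measurable (shellAction mass Λ) :=
    (differentiable_shellAction hmass.ne' (Λ : (ℝ × (Fin m → ℝ)) →ₗ[ℝ] ℝ × (Fin m → ℝ))).continuous
      |>.measurable
  have hcomm : Λ ∘ massShellLift mass = massShellLift mass ∘ shellAction mass Λ :=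
    funext fun p => (massShellLift_shellAction hmass.ne' hshell p).symm
  change Measure.map Λ (Measure.map (massShellLift mass) _) = Measure.map (massShellLift mass) _
  rw [Measure.map_map hΛ hlift, hcomm, ← Measure.map_map hlift hψ,
    map_shellAction_withDensity hmass.ne' hq hshell]

/-- **Lorentz invariance of the positive mass-shell measure.** Let `d = m + 1 ≥ 2` and
`mass > 0`. Every linear automorphism `Λ` of `ℝ^d` preserving the Minkowski form and mapping
the forward mass shell `{q = mass², k₀ > 0}` into itself leaves the mass-shell measure
`δ⁺_mass` invariant. -/
theorem massShellMeasure_lorentz_invariant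
    (m : ℕ) (hm : 1 ≤ m) (mass : ℝ) (hmass : 0 < mass)
    (Λ : (ℝ × (Fin m → ℝ)) ≃ₗ[ℝ] (ℝ × (Fin m → ℝ)))
    (hq : ∀ k, minkowskiQ (Λ k) = minkowskiQ k)
    (hshell : Set.MapsTo (⇑Λ)
      {k : ℝ × (Fin m → ℝ) | minkowskiQ k = mass ^ 2 ∧ 0 < k.1}
      {k : ℝ × (Fin m → ℝ) | minkowskiQ k = mass ^ 2 ∧ 0 < k.1}) :
    Measure.map (⇑Λ) (massShellMeasure mass) = massShellMeasure mass :=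
  massShellMeasure_lorentz_invariant_general m mass hmass Λ hq hshell
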